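/- arXiv:1505.01354 — 2 statements merged into one kernel-verified Lean document; each statement's English description precedes it below -/
import Mathlib

section
/- Fix vectors h₁,…,h_K ∈ ℂᴺ, unit-modulus phases e^{jφ₁},…,e^{jφ_K}, θ ∈ (0,π/2) and γᵢ > 0. Define, for precoders t₁,…,t_K ∈ ℂᴺ, the composite vector w = Σₖ tₖ e^{j(φₖ−φ₁)} and modified channels h̃ᵢ = hᵢ e^{j(φ₁−φᵢ)}. Then the optimal value of: minimize ‖Σₖ tₖ e^{j(φₖ−φ₁)}‖² over (t₁,…,t_K) subject to |Im(hᵢᵀ Σₖ tₖ e^{j(φₖ−φᵢ)})| ≤ (Re(hᵢᵀ Σₖ tₖ e^{j(φₖ−φᵢ)}) − γᵢ)tan θ for all i, equals the optimal value of: minimize ‖w‖² over w ∈ ℂᴺ subject to |Im(h̃ᵢᵀ w)| ≤ (Re(h̃ᵢᵀ w) − γᵢ)tan θ for all i. Moreover, if w* is optimal for the second problem, then tₖ* = (w*/K)·e^{j(φ₁−φₖ)} is optimal for the first. -/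
open Real Complex Finset

/-! Both the objective and the constraints of the broadcast problem depend on the precoders
`t₁, …, t_K` only through the composite vector `w = Σₖ tₖ e^{j(φₖ−φ₁)}`, since
`hᵢᵀ Σₖ tₖ e^{j(φₖ−φᵢ)} = (hᵢ e^{j(φ₁−φᵢ)})ᵀ w`. Every `w` is attained, by the rotated precoders
`tₖ = (w / K) e^{j(φ₁−φₖ)}`, so the two problems attain the same set of objective values. -/

/-- Noiseless phase-rotated received symbol of user `i`:  `hᵢᵀ Σₖ tₖ e^{j(φₖ−φᵢ)}`. -/
noncomputable def rxSym {N K : ℕ} (h : Fin K → Fin N → ℂ) (φ : Fin K → ℝ)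
    (t : Fin K → Fin N → ℂ) (i : Fin K) : ℂ :=
  ∑ j : Fin N, h i j * (∑ k : Fin K, Complex.exp (Complex.I * (φ k - φ i)) * t k j)

/-- Transmit-power objective  `‖Σₖ tₖ e^{j(φₖ−φ₁)}‖²` (phase reference user `i1`). -/
noncomputable def txPow {N K : ℕ} (φ : Fin K → ℝ) (i1 : Fin K)
    (t : Fin K → Fin N → ℂ) : ℝ :=
  ∑ j : Fin N, ‖∑ k : Fin K, Complex.exp (Complex.I * (φ k - φ i1)) * t k j‖ ^ 2

lemma exp_I_sub_mul_exp_I_sub (a b c : ℝ) :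
    Complex.exp (Complex.I * (a - b)) * Complex.exp (Complex.I * (b - c)) =
      Complex.exp (Complex.I * (a - c)) := by
  rw [← Complex.exp_add]
  ring_nf

section Composite

variable {N K : ℕ} (φ : Fin K → ℝ) (i1 : Fin K)

noncomputable def compositeVec (t : Fin K → Fin N → ℂ) : Fin N → ℂ :=
  fun j => ∑ k : Fin K, Complex.exp (Complex.I * (φ k - φ i1)) * t k j

noncomputable def rotatedPrecoder (w : Fin N → ℂ) : Fin K → Fin N → ℂ :=
  fun k j => (w j / (K : ℂ)) * Complex.exp (Complex.I * (φ i1 - φ k))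

lemma txPow_eq_sum_norm_compositeVec (t : Fin K → Fin N → ℂ) :
    txPow φ i1 t = ∑ j : Fin N, ‖compositeVec φ i1 t j‖ ^ 2 :=
  rfl

lemma rxSym_eq_sum_mul_compositeVec (h : Fin K → Fin N → ℂ) (t : Fin K → Fin N → ℂ)
    (i : Fin K) :
    rxSym h φ t i =
      ∑ j : Fin N, h i j * Complex.exp (Complex.I * (φ i1 - φ i)) * compositeVec φ i1 t j := by
  refine Finset.sum_congr rfl fun j _ => ?_
  simp only [compositeVec, Finset.mul_sum]
  refine Finset.sum_congr rfl fun k _ => ?_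
  rw [← exp_I_sub_mul_exp_I_sub (φ k) (φ i1) (φ i)]
  ring

lemma compositeVec_rotatedPrecoder (hK : 0 < K) (w : Fin N → ℂ) :
    compositeVec φ i1 (rotatedPrecoder φ i1 w) = w := by
  funext j
  have hterm : ∀ k : Fin K, Complex.exp (Complex.I * (φ k - φ i1)) *
      rotatedPrecoder φ i1 w k j = w j / K := by
    intro k
    rw [rotatedPrecoder, mul_left_comm, exp_I_sub_mul_exp_I_sub, sub_self, mul_zero,
      Complex.exp_zero, mul_one]
  simp only [compositeVec, hterm, Finset.sum_const, Finset.card_univ, Fintype.card_fin,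
    nsmul_eq_mul]
  field_simp [Nat.cast_ne_zero.mpr hK.ne']

lemma txPow_rotatedPrecoder (hK : 0 < K) (w : Fin N → ℂ) :
    txPow φ i1 (rotatedPrecoder φ i1 w) = ∑ j : Fin N, ‖w j‖ ^ 2 := by
  rw [txPow_eq_sum_norm_compositeVec, compositeVec_rotatedPrecoder φ i1 hK]

lemma compositeVec_surjective (hK : 0 < K) :
    Function.Surjective (compositeVec (N := N) φ i1) :=
  fun w => ⟨rotatedPrecoder φ i1 w, compositeVec_rotatedPrecoder φ i1 hK w⟩

lemma setOf_rxSym_txPow_eq_setOf_compositeVec (hK : 0 < K) (h : Fin K → Fin N → ℂ)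
    (C : Fin K → ℂ → Prop) :
    { p | ∃ t : Fin K → Fin N → ℂ, (∀ i, C i (rxSym h φ t i)) ∧ p = txPow φ i1 t } =
      { p | ∃ w : Fin N → ℂ,
        (∀ i, C i (∑ j : Fin N, h i j * Complex.exp (Complex.I * (φ i1 - φ i)) * w j)) ∧
        p = ∑ j : Fin N, ‖w j‖ ^ 2 } := by
  ext p
  simp only [Set.mem_ofPred_eq, rxSym_eq_sum_mul_compositeVec φ i1,
    txPow_eq_sum_norm_compositeVec]
  refine Iff.symm ?_
  exact (compositeVec_surjective φ i1 hK).exists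

end Composite

theorem stmt_2_general (N K : ℕ) (hK : 0 < K) (h : Fin K → Fin N → ℂ) (φ : Fin K → ℝ)
    (θ : ℝ) (γ : Fin K → ℝ) :
    letI i1 : Fin K := ⟨0, hK⟩
    letI hmod : Fin K → Fin N → ℂ := fun i j => h i j * Complex.exp (Complex.I * (φ i1 - φ i))
    letI BC : Set ℝ := { p | ∃ t : Fin K → Fin N → ℂ,
        (∀ i, |(rxSym h φ t i).im| ≤ ((rxSym h φ t i).re - γ i) * Real.tan θ) ∧
        p = txPow φ i1 t }
    letI MC : Set ℝ := { p | ∃ w : Fin N → ℂ,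
        (∀ i, |(∑ j : Fin N, hmod i j * w j).im| ≤
              ((∑ j : Fin N, hmod i j * w j).re - γ i) * Real.tan θ) ∧
        p = ∑ j : Fin N, ‖w j‖ ^ 2 }
    sInf BC = sInf MC ∧
    ∀ w : Fin N → ℂ,
      IsLeast MC (∑ j : Fin N, ‖w j‖ ^ 2) →
      (∀ i, |(∑ j : Fin N, hmod i j * w j).im| ≤
            ((∑ j : Fin N, hmod i j * w j).re - γ i) * Real.tan θ) →
      IsLeast BC (txPow φ i1
        (fun k j => (w j / (K : ℂ)) * Complex.exp (Complex.I * (φ i1 - φ k)))) := by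
  have hBC := setOf_rxSym_txPow_eq_setOf_compositeVec φ ⟨0, hK⟩ hK h
    (fun i z => |z.im| ≤ (z.re - γ i) * Real.tan θ)
  refine ⟨congrArg sInf hBC, fun w hw _ => ?_⟩
  rw [hBC]
  exact (txPow_rotatedPrecoder φ _ hK w).symm ▸ hw

theorem stmt_2 (N K : ℕ) (hK : 0 < K) (h : Fin K → Fin N → ℂ) (φ : Fin K → ℝ)
    (θ : ℝ) (hθ : θ ∈ Set.Ioo 0 (π / 2)) (γ : Fin K → ℝ) (hγ : ∀ i, 0 < γ i) :
    letI i1 : Fin K := ⟨0, hK⟩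
    letI hmod : Fin K → Fin N → ℂ := fun i j => h i j * Complex.exp (Complex.I * (φ i1 - φ i))
    letI BC : Set ℝ := { p | ∃ t : Fin K → Fin N → ℂ,
        (∀ i, |(rxSym h φ t i).im| ≤ ((rxSym h φ t i).re - γ i) * Real.tan θ) ∧
        p = txPow φ i1 t }
    letI MC : Set ℝ := { p | ∃ w : Fin N → ℂ,
        (∀ i, |(∑ j : Fin N, hmod i j * w j).im| ≤
              ((∑ j : Fin N, hmod i j * w j).re - γ i) * Real.tan θ) ∧
        p = ∑ j : Fin N, ‖w j‖ ^ 2 }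
    sInf BC = sInf MC ∧
    ∀ w : Fin N → ℂ,
      IsLeast MC (∑ j : Fin N, ‖w j‖ ^ 2) →
      (∀ i, |(∑ j : Fin N, hmod i j * w j).im| ≤
            ((∑ j : Fin N, hmod i j * w j).re - γ i) * Real.tan θ) →
      IsLeast BC (txPow φ i1
        (fun k j => (w j / (K : ℂ)) * Complex.exp (Complex.I * (φ i1 - φ k)))) :=
  stmt_2_general N K hK h φ θ γ
end

section
/- Let a, b ∈ ℝ, w₁, w₂ ∈ ℝⁿ, δ > 0, t > 0, c ≥ 0. The semi-infinite constraint: for all e ∈ ℝⁿ with ‖e‖ ≤ δ, |a + eᵀw₁| ≤ (b + eᵀw₂)·t − c, holds if and only if both a − b·t + δ‖w₁ − t·w₂‖ + c ≤ 0 and −a − b·t + δ‖w₁ + t·w₂‖ + c ≤ 0. -/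
open RealInnerProductSpace

section

variable {E : Type*} [NormedAddCommGroup E] [InnerProductSpace ℝ E]

theorem forall_norm_le_inner_le_iff {δ : ℝ} (hδ : 0 ≤ δ) (v : E) (K : ℝ) :
    (∀ e : E, ‖e‖ ≤ δ → ⟪e, v⟫ ≤ K) ↔ δ * ‖v‖ ≤ K := by
  refine ⟨fun h => ?_, fun h e he => ?_⟩
  · rcases eq_or_ne v 0 with rfl | hv
    · simpa using h 0 (by simpa using hδ)
    have hv' : 0 < ‖v‖ := norm_pos_iff.mpr hv
    have hnorm : ‖(δ / ‖v‖) • v‖ = δ := by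
      rw [norm_smul, Real.norm_of_nonneg (by positivity), div_mul_cancel₀ _ hv'.ne']
    calc δ * ‖v‖ = ⟪(δ / ‖v‖) • v, v⟫ := by
          rw [real_inner_smul_left, real_inner_self_eq_norm_sq]
          field_simp
      _ ≤ K := h _ hnorm.le
  · calc ⟪e, v⟫ ≤ ‖e‖ * ‖v‖ := real_inner_le_norm e v
      _ ≤ δ * ‖v‖ := by gcongr
      _ ≤ K := h

theorem abs_add_inner_le_mul_sub_iff (a b t c : ℝ) (e w₁ w₂ : E) :
    |a + ⟪e, w₁⟫| ≤ (b + ⟪e, w₂⟫) * t - c ↔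
      ⟪e, w₁ - t • w₂⟫ ≤ b * t - a - c ∧ ⟪e, -(w₁ + t • w₂)⟫ ≤ a + b * t - c := by
  rw [abs_le, inner_sub_right, inner_neg_right, inner_add_right, real_inner_smul_right]
  constructor <;> rintro ⟨h₁, h₂⟩ <;> constructor <;> linarith

end

theorem stmt_10_general (n : ℕ) (a b : ℝ) (w₁ w₂ : EuclideanSpace ℝ (Fin n))
    (δ t c : ℝ) (hδ : 0 < δ) :
    (∀ e : EuclideanSpace ℝ (Fin n), ‖e‖ ≤ δ →
        |a + ⟪e, w₁⟫| ≤ (b + ⟪e, w₂⟫) * t - c) ↔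
    (a - b * t + δ * ‖w₁ - t • w₂‖ + c ≤ 0 ∧
     -a - b * t + δ * ‖w₁ + t • w₂‖ + c ≤ 0) := by
  simp only [abs_add_inner_le_mul_sub_iff, imp_and, forall_and,
    forall_norm_le_inner_le_iff hδ.le, norm_neg]
  constructor <;> rintro ⟨h₁, h₂⟩ <;> constructor <;> linarith

theorem stmt_10 (n : ℕ) (a b : ℝ) (w₁ w₂ : EuclideanSpace ℝ (Fin n))
    (δ t c : ℝ) (hδ : 0 < δ) (ht : 0 < t) (hc : 0 ≤ c) :
    (∀ e : EuclideanSpace ℝ (Fin n), ‖e‖ ≤ δ →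
        |a + ⟪e, w₁⟫| ≤ (b + ⟪e, w₂⟫) * t - c) ↔
    (a - b * t + δ * ‖w₁ - t • w₂‖ + c ≤ 0 ∧
     -a - b * t + δ * ‖w₁ + t • w₂‖ + c ≤ 0) :=
  stmt_10_general n a b w₁ w₂ δ t c hδ
end
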